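/- In the starting Latin cube L of order n=2t, fix a symbol b and let B1 be the set of (row, file)-coordinate pairs (i,k) with L(i,1,k) = b. Then for every column layer j, all cells (i,j,k) with (i,k) ∈ B1 contain the same symbol. -/

import Mathlib

/-!
A cell `(i, j, k)` is *straight* when `i` and `k` lie in the same half of `{1, …, 2t}`. Within a
column layer, straight cells carry symbols from one half of `{1, …, 2t}` and the other cells from
the other half; moreover the symbol of a straight cell depends only on `j` and on `k - i mod t`,
and that of any other cell only on `j` and on `i + k mod t`. So the symbol of `(i, k)` in one layer
determines its kind and its residue, hence its symbol in every layer.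
-/

/-- The representative of `x` modulo `t` in `{1, ..., t}`. -/
def rmod (t : ℕ) (x : ℤ) : ℤ := (x - 1) % t + 1

/-- The starting Latin cube of order `2*t`. -/
def SLC (t : ℕ) (i j k : ℤ) : ℤ :=
  if (i ≤ t ∧ j ≤ t ∧ k ≤ t) ∨ ((t:ℤ) < i ∧ (t:ℤ) < k ∧ j ≤ t) then rmod t (j - i + k)
  else if ((t:ℤ) < i ∧ (t:ℤ) < j ∧ k ≤ t) ∨ ((t:ℤ) < j ∧ (t:ℤ) < k ∧ i ≤ t) then rmod t (i - j + k)
  else if (i ≤ t ∧ k ≤ t ∧ (t:ℤ) < j) ∨ ((t:ℤ) < i ∧ (t:ℤ) < j ∧ (t:ℤ) < k) then rmod t (j - i + k) + t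
  else rmod t (i - j + k) + t

section StartingLatinCube

variable {t : ℕ}

theorem rmod_eq_rmod_iff {x y : ℤ} : rmod t x = rmod t y ↔ x ≡ y [ZMOD t] := by
  rw [rmod, rmod, add_left_inj]
  exact ⟨fun h => by simpa using Int.ModEq.add_right 1 (show x - 1 ≡ y - 1 [ZMOD t] from h),
    fun h => h.sub_right 1⟩

theorem rmod_add_right_eq {x y : ℤ} (h : rmod t x = rmod t y) (c : ℤ) :
    rmod t (x + c) = rmod t (y + c) :=
  rmod_eq_rmod_iff.2 ((rmod_eq_rmod_iff.1 h).add_right c)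

theorem one_le_rmod (ht : 0 < t) (x : ℤ) : 1 ≤ rmod t x := by
  have := Int.emod_nonneg (x - 1) (by omega : (t : ℤ) ≠ 0)
  unfold rmod
  omega

theorem rmod_le (ht : 0 < t) (x : ℤ) : rmod t x ≤ t := by
  have := Int.emod_lt_of_pos (x - 1) (by omega : (0 : ℤ) < t)
  unfold rmod
  omega

theorem SLC_of_iff {i j k : ℤ} (h : i ≤ t ↔ k ≤ t) :
    SLC t i j k = rmod t (j - i + k) + if j ≤ t then 0 else t := by
  rw [iff_iff_implies_and_implies] at h
  unfold SLC
  split_ifs <;> omega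

theorem SLC_of_not_iff {i j k : ℤ} (h : ¬(i ≤ t ↔ k ≤ t)) :
    SLC t i j k = rmod t (i - j + k) + if j ≤ t then t else 0 := by
  rw [iff_iff_implies_and_implies] at h
  unfold SLC
  split_ifs <;> omega

theorem SLC_le_iff (ht : 0 < t) (i j k : ℤ) :
    SLC t i j k ≤ t ↔ ((i ≤ t ↔ k ≤ t) ↔ j ≤ t) := by
  by_cases hs : i ≤ t ↔ k ≤ t
  · have := rmod_le ht (j - i + k)
    have := one_le_rmod ht (j - i + k)
    rw [SLC_of_iff hs, iff_true_intro hs, true_iff]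
    split_ifs <;> omega
  · have := rmod_le ht (i - j + k)
    have := one_le_rmod ht (i - j + k)
    rw [SLC_of_not_iff hs, iff_false_intro hs, false_iff]
    split_ifs <;> omega

theorem SLC_eq_of_eq_in_layer (ht : 0 < t) {i k i' k' j₀ : ℤ}
    (h : SLC t i j₀ k = SLC t i' j₀ k') (j : ℤ) : SLC t i j k = SLC t i' j k' := by
  have hkind : (i ≤ t ↔ k ≤ t) ↔ (i' ≤ t ↔ k' ≤ t) := by
    have := SLC_le_iff ht i j₀ k
    have := SLC_le_iff ht i' j₀ k'
    rw [h] at *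
    tauto
  by_cases hs : i ≤ t ↔ k ≤ t
  · rw [SLC_of_iff hs, SLC_of_iff (hkind.1 hs)] at h ⊢
    rw [show j - i + k = j₀ - i + k + (j - j₀) by ring,
      show j - i' + k' = j₀ - i' + k' + (j - j₀) by ring, rmod_add_right_eq (add_right_cancel h)]
  · rw [SLC_of_not_iff hs, SLC_of_not_iff (mt hkind.2 hs)] at h ⊢
    rw [show i - j + k = i - j₀ + k + (j₀ - j) by ring,
      show i' - j + k' = i' - j₀ + k' + (j₀ - j) by ring, rmod_add_right_eq (add_right_cancel h)]

end StartingLatinCube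

theorem starting_latin_cube_symbol_column_block_general (t : ℕ) (ht : 1 ≤ t)
    (b : ℤ) :
    ∀ j ∈ Finset.Icc (1:ℤ) (2*t),
      ∀ i ∈ Finset.Icc (1:ℤ) (2*t), ∀ k ∈ Finset.Icc (1:ℤ) (2*t),
      ∀ i' ∈ Finset.Icc (1:ℤ) (2*t), ∀ k' ∈ Finset.Icc (1:ℤ) (2*t),
      SLC t i 1 k = b → SLC t i' 1 k' = b → SLC t i j k = SLC t i' j k' := by
  intro j _ i _ k _ i' _ k' _ h h'
  exact SLC_eq_of_eq_in_layer ht (h.trans h'.symm) j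

/-- In the starting Latin cube of order `n = 2t`: fix a symbol `b`, and let `B₁` be the
set of (row,file) pairs `(i,k)` with `L(i,1,k) = b`. Then for every column layer `j`,
all cells `(i,j,k)` with `(i,k) ∈ B₁` contain the same symbol. -/
theorem starting_latin_cube_symbol_column_block (t : ℕ) (ht : 1 ≤ t)
    (b : ℤ) (hb : b ∈ Finset.Icc (1:ℤ) (2*t)) :
    ∀ j ∈ Finset.Icc (1:ℤ) (2*t),
      ∀ i ∈ Finset.Icc (1:ℤ) (2*t), ∀ k ∈ Finset.Icc (1:ℤ) (2*t),
      ∀ i' ∈ Finset.Icc (1:ℤ) (2*t), ∀ k' ∈ Finset.Icc (1:ℤ) (2*t),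
      SLC t i 1 k = b → SLC t i' 1 k' = b → SLC t i j k = SLC t i' j k' :=
  starting_latin_cube_symbol_column_block_general t ht b
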